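/- arXiv:2510.07235 — 2 statements merged into one kernel-verified Lean document; each statement's English description precedes it below -/
import Mathlib

section
/- Under the MAR setup, for every y ∈ [0,1] and m ∈ ℕ, the covariance between the Bernstein-smoothed pseudo estimator A_{n,m} = F̃_{n,m}(y) and the correction term B_{n,m} equals the variance of B_{n,m}: Cov(A_{n,m}, B_{n,m}) = Var(B_{n,m}) = n⁻¹ E[ ((1 − π(X₁))/π(X₁)) (Σ_{k=0}^m F_{Y₁|X₁}(k/m) b_{m,k}(y))² ]. Consequently, Var(A_{n,m} − B_{n,m}) = Var(F̃_{n,m}(y)) − n⁻¹ E[ ((1 − π(X₁))/π(X₁)) (Σ_{k=0}^m F_{Y₁|X₁}(k/m) b_{m,k}(y))² ]. -/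
/-!
Both estimators are sample means, `A_{n,m} = n⁻¹ ∑ aᵢ` and `B_{n,m} = n⁻¹ ∑ bᵢ`, with
`aᵢ = (δᵢ / π(Xᵢ)) 𝓑_m(𝟙{Yᵢ ≤ ·})(y)` and `bᵢ = (δᵢ / π(Xᵢ) - 1) S(Xᵢ)`, where
`S(x) = 𝓑_m(F_{Y|X=x})(y)`. Summands with different indices are independent and `E bᵢ = 0`, so
`Cov(A, B) = n⁻¹ E[aᵢ bᵢ]` and `Var B = n⁻¹ E[bᵢ²]`.

For one observation, conditional independence of `δ` and `Y` given `X` turns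
`E[δ 𝟙{Y ≤ t} | X]` into `π(X) F_{Y|X}(t)`, hence `E[(δ f / π(X) - g(X)) k(X)] = 0` whenever
`E[δ f | X] = π(X) g(X)`. Since `δ² = δ`, both `a b` and `b²` are `G(X) = ((1 - π(X)) / π(X)) S(X)²`
plus a term of this form, so `E[a b] = E[b²] = E[G(X)]`. The last claim is then
`Var(A - B) = Var A - 2 Cov(A, B) + Var B`.
-/

open MeasureTheory ProbabilityTheory Filter Asymptotics

noncomputable section

/-- Bernstein basis polynomial `b_{m,k}(y) = C(m,k) y^k (1-y)^(m-k)`. -/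
def bern (m k : ℕ) (y : ℝ) : ℝ := (m.choose k : ℝ) * y ^ k * (1 - y) ^ (m - k)

/-- Indicator `𝟙{t ≤ y}` as a real number. -/
def ind (t y : ℝ) : ℝ := if t ≤ y then 1 else 0

/-- The IPW pseudo-empirical CDF
`F̃_n(y) = n⁻¹ ∑_{i<n} (δ_i / π(X_i)) 𝟙{Y_i ≤ y}` (known propensities). -/
def tildeF {Ω α : Type*} (Y : ℕ → Ω → ℝ) (X : ℕ → Ω → α) (δ : ℕ → Ω → ℝ) (π : α → ℝ)
    (n : ℕ) (y : ℝ) (ω : Ω) : ℝ :=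
  (n : ℝ)⁻¹ * ∑ i ∈ Finset.range n, δ i ω / π (X i ω) * ind (Y i ω) y

/-- Bernstein smoothing (the Bernstein operator `𝓑_m`) applied to a function `G`. -/
def bsmooth (m : ℕ) (G : ℝ → ℝ) (y : ℝ) : ℝ :=
  ∑ k ∈ Finset.range (m + 1), G ((k : ℝ) / (m : ℝ)) * bern m k y

/-- The Bernstein-smoothed IPW pseudo estimator `F̃_{n,m}(y) = 𝓑_m(F̃_n)(y)`. -/
def tildeFnm {Ω α : Type*} (Y : ℕ → Ω → ℝ) (X : ℕ → Ω → α) (δ : ℕ → Ω → ℝ) (π : α → ℝ)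
    (n m : ℕ) (y : ℝ) (ω : Ω) : ℝ :=
  bsmooth m (fun t => tildeF Y X δ π n t ω) y

/-- The propensity-correction term
`B_{n,m} = n⁻¹ ∑_i ((δ_i − π(X_i))/π(X_i)) ∑_k F_{Y_i|X_i}(k/m) b_{m,k}(y)`. -/
def corrB {Ω α : Type*} (X : ℕ → Ω → α) (δ : ℕ → Ω → ℝ) (π : α → ℝ)
    (Fc : α → ℝ → ℝ) (n m : ℕ) (y : ℝ) (ω : Ω) : ℝ :=
  (n : ℝ)⁻¹ * ∑ i ∈ Finset.range n,
    (δ i ω - π (X i ω)) / π (X i ω) *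
      ∑ k ∈ Finset.range (m + 1), Fc (X i ω) ((k : ℝ) / (m : ℝ)) * bern m k y

/-- Covariance of two real random variables. -/
def cov {Ω : Type*} [MeasurableSpace Ω] (f g : Ω → ℝ) (μ : Measure Ω) : ℝ :=
  ∫ ω, (f ω - ∫ ω', f ω' ∂μ) * (g ω - ∫ ω', g ω' ∂μ) ∂μ

open Finset

lemma MeasureTheory.MemLp.mul_of_top {Ω : Type*} [MeasurableSpace Ω] {μ : Measure Ω}
    {f g : Ω → ℝ} (hf : MemLp f ⊤ μ) (hg : MemLp g ⊤ μ) : MemLp (fun ω => f ω * g ω) ⊤ μ :=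
  hg.mul' hf

section Bernstein

variable {m : ℕ} {y : ℝ}

lemma bsmooth_const_mul (c : ℝ) (G : ℝ → ℝ) :
    bsmooth m (fun t => c * G t) y = c * bsmooth m G y := by
  simp only [bsmooth, mul_sum, mul_assoc]

lemma bsmooth_sum {ι : Type*} (s : Finset ι) (G : ι → ℝ → ℝ) :
    bsmooth m (fun t => ∑ i ∈ s, G i t) y = ∑ i ∈ s, bsmooth m (G i) y := by
  simp only [bsmooth, sum_mul]
  exact sum_comm

variable {Ω : Type*} [MeasurableSpace Ω] {μ : Measure Ω} {F G : Ω → ℝ → ℝ}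

lemma memLp_bsmooth {p : ENNReal} (hF : ∀ k : ℕ, MemLp (fun ω => F ω (k / m)) p μ) :
    MemLp (fun ω => bsmooth m (F ω) y) p μ :=
  memLp_finsetSum _ fun k _ => (hF k).mul_const _

lemma condExp_bsmooth (m' : MeasurableSpace Ω)
    (hF : ∀ k : ℕ, Integrable (fun ω => F ω (k / m)) μ)
    (hFG : ∀ k : ℕ, μ[fun ω => F ω (k / m) | m'] =ᵐ[μ] fun ω => G ω (k / m)) :
    μ[fun ω => bsmooth m (F ω) y | m'] =ᵐ[μ] fun ω => bsmooth m (G ω) y := by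
  have hF_sum : (fun ω => bsmooth m (F ω) y)
      = ∑ k ∈ range (m + 1), bern m k y • fun ω => F ω (k / m) := by
    ext ω
    simp [bsmooth, mul_comm]
  have hterm : ∀ k : ℕ, μ[bern m k y • fun ω => F ω (k / m) | m']
      =ᵐ[μ] bern m k y • fun ω => G ω (k / m) :=
    fun k => (condExp_smul _ _ m').trans ((hFG k).const_smul _)
  rw [hF_sum]
  filter_upwards [condExp_finsetSum (s := range (m + 1)) (fun k _ => (hF k).smul (bern m k y)) m',
    ae_all_iff.2 hterm] with ω hsum_ω hterm_ω
  simp only [hsum_ω, Finset.sum_apply, hterm_ω, bsmooth, Pi.smul_apply, smul_eq_mul, mul_comm]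

end Bernstein

lemma integral_mul_comp_of_condExp_eq {Ω α : Type*} [MeasurableSpace Ω] [MeasurableSpace α]
    {μ : Measure Ω} [IsFiniteMeasure μ] {X : Ω → α} (hX : Measurable X) {f : Ω → ℝ}
    {g h : α → ℝ} (hh : Measurable h) (hf : Integrable f μ)
    (hfh : Integrable (fun ω => f ω * h (X ω)) μ)
    (hfg : μ[f | MeasurableSpace.comap X inferInstance] =ᵐ[μ] fun ω => g (X ω)) :
    ∫ ω, f ω * h (X ω) ∂μ = ∫ ω, g (X ω) * h (X ω) ∂μ := by
  have hhX : StronglyMeasurable[MeasurableSpace.comap X inferInstance] fun ω => h (X ω) :=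
    (hh.comp (comap_measurable X)).stronglyMeasurable
  calc ∫ ω, f ω * h (X ω) ∂μ
      = ∫ ω, (μ[fun ω => f ω * h (X ω) | MeasurableSpace.comap X inferInstance]) ω ∂μ :=
        (integral_condExp hX.comap_le).symm
    _ = ∫ ω, g (X ω) * h (X ω) ∂μ := by
        refine integral_congr_ae ?_
        filter_upwards [condExp_mul_of_stronglyMeasurable_right hhX hfh hf, hfg] with ω h1 h2
        exact h1.trans (by rw [Pi.mul_apply, h2])

lemma covariance_mean_mean {Ω ι : Type*} [MeasurableSpace Ω] {μ : Measure Ω}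
    [IsFiniteMeasure μ] (s : Finset ι) {f g : ι → Ω → ℝ} {c : ℝ}
    (hf : ∀ i ∈ s, MemLp (f i) 2 μ) (hg : ∀ i ∈ s, MemLp (g i) 2 μ)
    (hdiag : ∀ i ∈ s, cov[f i, g i; μ] = c)
    (hoff : ∀ i ∈ s, ∀ j ∈ s, i ≠ j → cov[f i, g j; μ] = 0) :
    cov[fun ω => (#s : ℝ)⁻¹ * ∑ i ∈ s, f i ω, fun ω => (#s : ℝ)⁻¹ * ∑ i ∈ s, g i ω; μ]
      = (#s : ℝ)⁻¹ * c := by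
  rw [covariance_const_mul_left, covariance_const_mul_right,
    covariance_fun_sum_fun_sum' hf hg,
    sum_congr rfl fun i hi => sum_eq_single_of_mem i hi fun j hj hji => hoff i hi j hj hji.symm,
    sum_congr rfl hdiag, sum_const, nsmul_eq_mul]
  rcases eq_or_ne (#s : ℝ) 0 with hs | hs
  · simp [hs]
  · field_simp

lemma measurable_ind {Ω : Type*} [MeasurableSpace Ω] {Y : Ω → ℝ} (hY : Measurable Y) (t : ℝ) :
    Measurable fun ω => ind (Y ω) t :=
  Measurable.ite (hY measurableSet_Iic) measurable_const measurable_const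

lemma integral_comp_X_eq_of_identDistrib {Ω α : Type*} [MeasurableSpace Ω] [MeasurableSpace α]
    [MeasurableSingletonClass α] [Countable α] {μ : Measure Ω} {Y δ : ℕ → Ω → ℝ}
    {X : ℕ → Ω → α} (hiid : ∀ i j, IdentDistrib (fun ω => (Y i ω, X i ω, δ i ω))
      (fun ω => (Y j ω, X j ω, δ j ω)) μ μ) (g : α → ℝ) (i : ℕ) :
    ∫ ω, g (X i ω) ∂μ = ∫ ω, g (X 0 ω) ∂μ :=
  ((hiid i 0).comp
    ((measurable_of_countable g).comp (measurable_fst.comp measurable_snd))).integral_eq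

section Summands

variable {Ω α : Type*}

def ipwSummand (π : α → ℝ) (m : ℕ) (y : ℝ) (Y : Ω → ℝ) (X : Ω → α) (δ : Ω → ℝ) (ω : Ω) : ℝ :=
  δ ω / π (X ω) * bsmooth m (ind (Y ω)) y

def corrSummand (π : α → ℝ) (Fc : α → ℝ → ℝ) (m : ℕ) (y : ℝ) (X : Ω → α) (δ : Ω → ℝ)
    (ω : Ω) : ℝ :=
  (δ ω - π (X ω)) / π (X ω) * bsmooth m (Fc (X ω)) y

lemma tildeFnm_eq_mean (Y : ℕ → Ω → ℝ) (X : ℕ → Ω → α) (δ : ℕ → Ω → ℝ) (π : α → ℝ)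
    (n m : ℕ) (y : ℝ) :
    tildeFnm Y X δ π n m y
      = fun ω => (n : ℝ)⁻¹ * ∑ i ∈ range n, ipwSummand π m y (Y i) (X i) (δ i) ω := by
  ext ω
  simp only [tildeFnm, tildeF, bsmooth_const_mul, bsmooth_sum, ipwSummand]

variable [MeasurableSpace Ω] [MeasurableSpace α] [MeasurableSingletonClass α] [Countable α]
  {Y : Ω → ℝ} {X : Ω → α} {δ : Ω → ℝ} {π : α → ℝ} {m : ℕ} {y : ℝ}

lemma measurable_ipwSummand (hY : Measurable Y) (hX : Measurable X) (hδ : Measurable δ) :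
    Measurable (ipwSummand π m y Y X δ) :=
  (hδ.div ((measurable_of_countable π).comp hX)).mul
    (Finset.measurable_sum _ fun _ _ => (measurable_ind hY _).mul_const _)

lemma measurable_corrSummand (Fc : α → ℝ → ℝ) (hX : Measurable X) (hδ : Measurable δ) :
    Measurable (corrSummand π Fc m y X δ) :=
  ((hδ.sub ((measurable_of_countable π).comp hX)).div ((measurable_of_countable π).comp hX)).mul
    ((measurable_of_countable fun x => bsmooth m (Fc x) y).comp hX)

end Summands

structure MissingAtRandom {Ω α : Type*} [MeasurableSpace Ω] [StandardBorelSpace Ω]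
    [MeasurableSpace α] (μ : Measure Ω) [IsFiniteMeasure μ] (Y : Ω → ℝ) (X : Ω → α)
    (δ : Ω → ℝ) (π : α → ℝ) (Fc : α → ℝ → ℝ) : Prop where
  measurable_Y : Measurable Y
  measurable_X : Measurable X
  measurable_δ : Measurable δ
  δ_eq_zero_or_one : ∀ ω, δ ω = 0 ∨ δ ω = 1
  exists_pos_le_π : ∃ c, 0 < c ∧ ∀ x, c ≤ π x
  condExp_δ : μ[δ | MeasurableSpace.comap X inferInstance] =ᵐ[μ] fun ω => π (X ω)
  condIndepFun : CondIndepFun (MeasurableSpace.comap X inferInstance) measurable_X.comap_le δ Y μ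
  condExp_ind : ∀ t, μ[fun ω => ind (Y ω) t | MeasurableSpace.comap X inferInstance]
    =ᵐ[μ] fun ω => Fc (X ω) t

namespace MissingAtRandom

variable {Ω α : Type*} [MeasurableSpace Ω] [StandardBorelSpace Ω] [MeasurableSpace α]
  {μ : Measure Ω} [IsProbabilityMeasure μ]
  {Y : Ω → ℝ} {X : Ω → α} {δ : Ω → ℝ} {π : α → ℝ} {Fc : α → ℝ → ℝ} {m : ℕ} {y : ℝ}

lemma π_pos (h : MissingAtRandom μ Y X δ π Fc) (x : α) : 0 < π x := by
  obtain ⟨c, hc, hcπ⟩ := h.exists_pos_le_π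
  exact hc.trans_le (hcπ x)

lemma memLp_top_δ (h : MissingAtRandom μ Y X δ π Fc) : MemLp δ ⊤ μ :=
  memLp_top_of_bound h.measurable_δ.aestronglyMeasurable 1 <| ae_of_all _ fun ω => by
    rcases h.δ_eq_zero_or_one ω with hω | hω <;> simp [hω]

lemma memLp_top_ind (h : MissingAtRandom μ Y X δ π Fc) (t : ℝ) :
    MemLp (fun ω => ind (Y ω) t) ⊤ μ :=
  memLp_top_of_bound (measurable_ind h.measurable_Y t).aestronglyMeasurable 1 <|
    ae_of_all _ fun ω => by unfold ind; split_ifs <;> simp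

lemma memLp_top_Fc (h : MissingAtRandom μ Y X δ π Fc) (t : ℝ) :
    MemLp (fun ω => Fc (X ω) t) ⊤ μ :=
  ((h.memLp_top_ind t).condExp le_top).ae_eq (h.condExp_ind t)

lemma memLp_top_bsmooth_Fc (h : MissingAtRandom μ Y X δ π Fc) (m : ℕ) (y : ℝ) :
    MemLp (fun ω => bsmooth m (Fc (X ω)) y) ⊤ μ :=
  memLp_bsmooth fun _ => h.memLp_top_Fc _

lemma corrSummand_eq (h : MissingAtRandom μ Y X δ π Fc) (ω : Ω) :
    corrSummand π Fc m y X δ ω = (δ ω / π (X ω) - 1) * bsmooth m (Fc (X ω)) y := by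
  have := (h.π_pos (X ω)).ne'
  simp only [corrSummand]
  field_simp

lemma condExp_δ_mul_ind (h : MissingAtRandom μ Y X δ π Fc) (t : ℝ) :
    μ[fun ω => δ ω * ind (Y ω) t | MeasurableSpace.comap X inferInstance]
      =ᵐ[μ] fun ω => π (X ω) * Fc (X ω) t := by
  have hδ : δ = (δ ⁻¹' {1}).indicator fun _ => 1 := by
    ext ω
    rcases h.δ_eq_zero_or_one ω with hω | hω <;> simp [hω]
  have hind : (fun ω => ind (Y ω) t) = (Y ⁻¹' Set.Iic t).indicator fun _ => 1 := by
    ext ω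
    by_cases hω : Y ω ≤ t <;> simp [ind, hω]
  have hprod : (fun ω => δ ω * ind (Y ω) t)
      = (δ ⁻¹' {1} ∩ Y ⁻¹' Set.Iic t).indicator fun _ => 1 := by
    ext ω
    rcases h.δ_eq_zero_or_one ω with hδω | hδω <;> by_cases hYω : Y ω ≤ t <;>
      simp [ind, hδω, hYω]
  rw [hprod]
  refine ((condIndepFun_iff_condExp_inter_preimage_eq_mul h.measurable_δ h.measurable_Y).1
    h.condIndepFun _ _ (measurableSet_singleton 1) measurableSet_Iic).trans ?_
  filter_upwards [hδ ▸ h.condExp_δ, hind ▸ h.condExp_ind t] with ω hδω hindω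
  rw [hδω, hindω]

lemma condExp_δ_mul_bsmooth_ind (h : MissingAtRandom μ Y X δ π Fc) :
    μ[fun ω => δ ω * bsmooth m (ind (Y ω)) y | MeasurableSpace.comap X inferInstance]
      =ᵐ[μ] fun ω => π (X ω) * bsmooth m (Fc (X ω)) y := by
  simp_rw [← bsmooth_const_mul]
  exact condExp_bsmooth _
    (fun _ => (h.memLp_top_δ.mul_of_top (h.memLp_top_ind _)).integrable le_top)
    fun _ => h.condExp_δ_mul_ind _

variable [MeasurableSingletonClass α] [Countable α]

lemma memLp_top_inv_π (h : MissingAtRandom μ Y X δ π Fc) :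
    MemLp (fun ω => (π (X ω))⁻¹) ⊤ μ := by
  obtain ⟨c, hc, hcπ⟩ := h.exists_pos_le_π
  refine memLp_top_of_bound
    ((measurable_of_countable fun x => (π x)⁻¹).comp h.measurable_X).aestronglyMeasurable
    c⁻¹ (ae_of_all _ fun ω => ?_)
  rw [Real.norm_of_nonneg (inv_nonneg.2 (h.π_pos _).le)]
  exact inv_anti₀ hc (hcπ _)

lemma memLp_top_ipwSummand (h : MissingAtRandom μ Y X δ π Fc) :
    MemLp (ipwSummand π m y Y X δ) ⊤ μ :=
  ((h.memLp_top_δ.mul_of_top h.memLp_top_inv_π).mul_of_top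
    (memLp_bsmooth (m := m) (y := y) fun _ => h.memLp_top_ind _)).ae_eq
    (ae_of_all _ fun ω => by simp [ipwSummand, div_eq_mul_inv])

lemma memLp_top_corrSummand (h : MissingAtRandom μ Y X δ π Fc) :
    MemLp (corrSummand π Fc m y X δ) ⊤ μ :=
  (((h.memLp_top_δ.mul_of_top h.memLp_top_inv_π).sub (memLp_top_const 1)).mul_of_top
    (h.memLp_top_bsmooth_Fc m y)).ae_eq
    (ae_of_all _ fun ω => by simp [h.corrSummand_eq, div_eq_mul_inv])

lemma memLp_top_condVar (h : MissingAtRandom μ Y X δ π Fc) :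
    MemLp (fun ω => (1 - π (X ω)) / π (X ω) * bsmooth m (Fc (X ω)) y ^ 2) ⊤ μ :=
  ((h.memLp_top_inv_π.sub (memLp_top_const 1)).mul_of_top
    ((h.memLp_top_bsmooth_Fc m y).mul_of_top (h.memLp_top_bsmooth_Fc m y))).ae_eq <|
    ae_of_all _ fun ω => by
      have := (h.π_pos (X ω)).ne'
      simp only [Pi.sub_apply]
      field_simp

lemma integral_ipw_sub_mul_eq_zero (h : MissingAtRandom μ Y X δ π Fc) {f : Ω → ℝ} {g k : α → ℝ}
    (hf : MemLp f ⊤ μ) (hg : MemLp (fun ω => g (X ω)) ⊤ μ) (hk : MemLp (fun ω => k (X ω)) ⊤ μ)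
    (hfg : μ[fun ω => δ ω * f ω | MeasurableSpace.comap X inferInstance]
      =ᵐ[μ] fun ω => π (X ω) * g (X ω)) :
    ∫ ω, (δ ω / π (X ω) * f ω - g (X ω)) * k (X ω) ∂μ = 0 := by
  have hδf : MemLp (fun ω => δ ω * f ω) ⊤ μ := h.memLp_top_δ.mul_of_top hf
  have hδfkπ := (hδf.mul_of_top (hk.mul_of_top h.memLp_top_inv_π)).integrable le_top
  have hpull := integral_mul_comp_of_condExp_eq (g := fun x => π x * g x)
    (h := fun x => k x * (π x)⁻¹) h.measurable_X (measurable_of_countable _)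
    (hδf.integrable le_top) hδfkπ hfg
  calc ∫ ω, (δ ω / π (X ω) * f ω - g (X ω)) * k (X ω) ∂μ
      = ∫ ω, δ ω * f ω * (k (X ω) * (π (X ω))⁻¹) - g (X ω) * k (X ω) ∂μ := by
        congr with ω
        ring
    _ = 0 := by
        rw [integral_sub hδfkπ ((hg.mul_of_top hk).integrable le_top), hpull, sub_eq_zero]
        congr with ω
        have := (h.π_pos (X ω)).ne'
        field_simp

lemma integral_ipw_sub_one_mul_eq_zero (h : MissingAtRandom μ Y X δ π Fc) {k : α → ℝ}
    (hk : MemLp (fun ω => k (X ω)) ⊤ μ) :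
    ∫ ω, (δ ω / π (X ω) - 1) * k (X ω) ∂μ = 0 := by
  simpa using h.integral_ipw_sub_mul_eq_zero (f := fun _ => 1) (g := fun _ => 1)
    (memLp_top_const 1) (memLp_top_const 1) hk (by simpa using h.condExp_δ)

lemma integral_corrSummand (h : MissingAtRandom μ Y X δ π Fc) :
    ∫ ω, corrSummand π Fc m y X δ ω ∂μ = 0 := by
  simp_rw [h.corrSummand_eq]
  exact h.integral_ipw_sub_one_mul_eq_zero (k := fun x => bsmooth m (Fc x) y)
    (h.memLp_top_bsmooth_Fc m y)

lemma integral_ipwSummand_mul_corrSummand (h : MissingAtRandom μ Y X δ π Fc) :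
    ∫ ω, ipwSummand π m y Y X δ ω * corrSummand π Fc m y X δ ω ∂μ
      = ∫ ω, (1 - π (X ω)) / π (X ω) * bsmooth m (Fc (X ω)) y ^ 2 ∂μ := by
  have hpt : ∀ ω, ipwSummand π m y Y X δ ω * corrSummand π Fc m y X δ ω
      - (1 - π (X ω)) / π (X ω) * bsmooth m (Fc (X ω)) y ^ 2
      = (δ ω / π (X ω) * bsmooth m (ind (Y ω)) y - bsmooth m (Fc (X ω)) y)
        * (((π (X ω))⁻¹ - 1) * bsmooth m (Fc (X ω)) y) := fun ω => by
    have := (h.π_pos (X ω)).ne'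
    rcases h.δ_eq_zero_or_one ω with hω | hω
    · simp only [ipwSummand, corrSummand, hω]
      field_simp
      ring
    · simp only [ipwSummand, corrSummand, hω]
      field_simp
  rw [← sub_eq_zero, ← integral_sub
    ((h.memLp_top_ipwSummand.mul_of_top h.memLp_top_corrSummand).integrable le_top)
    (h.memLp_top_condVar.integrable le_top)]
  simp_rw [hpt]
  exact h.integral_ipw_sub_mul_eq_zero (g := fun x => bsmooth m (Fc x) y)
    (k := fun x => ((π x)⁻¹ - 1) * bsmooth m (Fc x) y) (memLp_bsmooth fun _ => h.memLp_top_ind _)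
    (h.memLp_top_bsmooth_Fc m y)
    ((h.memLp_top_inv_π.sub (memLp_top_const 1)).mul_of_top (h.memLp_top_bsmooth_Fc m y))
    h.condExp_δ_mul_bsmooth_ind

lemma integral_corrSummand_mul_self (h : MissingAtRandom μ Y X δ π Fc) :
    ∫ ω, corrSummand π Fc m y X δ ω * corrSummand π Fc m y X δ ω ∂μ
      = ∫ ω, (1 - π (X ω)) / π (X ω) * bsmooth m (Fc (X ω)) y ^ 2 ∂μ := by
  have hpt : ∀ ω, corrSummand π Fc m y X δ ω * corrSummand π Fc m y X δ ω
      - (1 - π (X ω)) / π (X ω) * bsmooth m (Fc (X ω)) y ^ 2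
      = (δ ω / π (X ω) - 1) * (((π (X ω))⁻¹ - 2) * bsmooth m (Fc (X ω)) y ^ 2) := fun ω => by
    have := (h.π_pos (X ω)).ne'
    rcases h.δ_eq_zero_or_one ω with hω | hω <;>
    · simp only [corrSummand, hω]
      field_simp
      ring
  rw [← sub_eq_zero, ← integral_sub
    ((h.memLp_top_corrSummand.mul_of_top h.memLp_top_corrSummand).integrable le_top)
    (h.memLp_top_condVar.integrable le_top)]
  simp_rw [hpt]
  exact h.integral_ipw_sub_one_mul_eq_zero
    (k := fun x => ((π x)⁻¹ - 2) * bsmooth m (Fc x) y ^ 2)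
    (((h.memLp_top_inv_π.sub (memLp_top_const 2)).mul_of_top
      ((h.memLp_top_bsmooth_Fc m y).mul_of_top (h.memLp_top_bsmooth_Fc m y))).ae_eq
      (ae_of_all _ fun ω => by simp [pow_two]))

lemma covariance_ipwSummand_corrSummand (h : MissingAtRandom μ Y X δ π Fc) :
    cov[ipwSummand π m y Y X δ, corrSummand π Fc m y X δ; μ]
      = ∫ ω, (1 - π (X ω)) / π (X ω) * bsmooth m (Fc (X ω)) y ^ 2 ∂μ := by
  rw [covariance_eq_sub (h.memLp_top_ipwSummand.mono_exponent le_top)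
    (h.memLp_top_corrSummand.mono_exponent le_top), h.integral_corrSummand, mul_zero, sub_zero]
  exact h.integral_ipwSummand_mul_corrSummand

lemma covariance_corrSummand_self (h : MissingAtRandom μ Y X δ π Fc) :
    cov[corrSummand π Fc m y X δ, corrSummand π Fc m y X δ; μ]
      = ∫ ω, (1 - π (X ω)) / π (X ω) * bsmooth m (Fc (X ω)) y ^ 2 ∂μ := by
  rw [covariance_eq_sub (h.memLp_top_corrSummand.mono_exponent le_top)
    (h.memLp_top_corrSummand.mono_exponent le_top), h.integral_corrSummand, mul_zero, sub_zero]
  exact h.integral_corrSummand_mul_self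

end MissingAtRandom

section Sample

variable {Ω α : Type*} [MeasurableSpace Ω] [StandardBorelSpace Ω] [MeasurableSpace α]
  [MeasurableSingletonClass α] [Countable α] {μ : Measure Ω} [IsProbabilityMeasure μ]
  {Y : ℕ → Ω → ℝ} {X : ℕ → Ω → α} {δ : ℕ → Ω → ℝ} {π : α → ℝ} {Fc : α → ℝ → ℝ}
  {n m : ℕ} {y : ℝ}

lemma memLp_tildeFnm (h : ∀ i, MissingAtRandom μ (Y i) (X i) (δ i) π Fc) :
    MemLp (tildeFnm Y X δ π n m y) 2 μ := by
  rw [tildeFnm_eq_mean]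
  exact (memLp_finsetSum _ fun i _ => (h i).memLp_top_ipwSummand.mono_exponent le_top).const_mul _

lemma memLp_corrB (h : ∀ i, MissingAtRandom μ (Y i) (X i) (δ i) π Fc) :
    MemLp (corrB X δ π Fc n m y) 2 μ :=
  (memLp_finsetSum _ fun i _ => (h i).memLp_top_corrSummand.mono_exponent le_top).const_mul _

variable (π m y) in
lemma measurable_ipwSummand_triple :
    Measurable (ipwSummand π m y (fun p : ℝ × α × ℝ => p.1) (fun p => p.2.1) (fun p => p.2.2)) :=
  measurable_ipwSummand measurable_fst (measurable_fst.comp measurable_snd)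
    (measurable_snd.comp measurable_snd)

variable (π Fc m y) in
lemma measurable_corrSummand_triple :
    Measurable (corrSummand π Fc m y (fun p : ℝ × α × ℝ => p.2.1) (fun p => p.2.2)) :=
  measurable_corrSummand Fc (measurable_fst.comp measurable_snd)
    (measurable_snd.comp measurable_snd)

lemma covariance_tildeFnm_corrB (h : ∀ i, MissingAtRandom μ (Y i) (X i) (δ i) π Fc)
    (hiid : ∀ i j, IdentDistrib (fun ω => (Y i ω, X i ω, δ i ω))
      (fun ω => (Y j ω, X j ω, δ j ω)) μ μ)
    (hindep : iIndepFun (fun i ω => (Y i ω, X i ω, δ i ω)) μ) :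
    cov[tildeFnm Y X δ π n m y, corrB X δ π Fc n m y; μ]
      = (n : ℝ)⁻¹ * ∫ ω, (1 - π (X 0 ω)) / π (X 0 ω) * bsmooth m (Fc (X 0 ω)) y ^ 2 ∂μ := by
  have ha i := (h i).memLp_top_ipwSummand (m := m) (y := y) |>.mono_exponent (p := 2) le_top
  have hb i := (h i).memLp_top_corrSummand (m := m) (y := y) |>.mono_exponent (p := 2) le_top
  have hmean := covariance_mean_mean (range n) (fun i _ => ha i) (fun i _ => hb i)
    (fun i _ => (h i).covariance_ipwSummand_corrSummand.trans <|
      integral_comp_X_eq_of_identDistrib hiid (fun x => (1 - π x) / π x * bsmooth m (Fc x) y ^ 2) i)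
    fun i _ j _ hij => ((hindep.indepFun hij).comp (measurable_ipwSummand_triple π m y)
      (measurable_corrSummand_triple π Fc m y)).covariance_eq_zero (ha i) (hb j)
  rw [card_range] at hmean
  rw [tildeFnm_eq_mean]
  exact hmean

lemma variance_corrB (h : ∀ i, MissingAtRandom μ (Y i) (X i) (δ i) π Fc)
    (hiid : ∀ i j, IdentDistrib (fun ω => (Y i ω, X i ω, δ i ω))
      (fun ω => (Y j ω, X j ω, δ j ω)) μ μ)
    (hindep : iIndepFun (fun i ω => (Y i ω, X i ω, δ i ω)) μ) :
    Var[corrB X δ π Fc n m y; μ]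
      = (n : ℝ)⁻¹ * ∫ ω, (1 - π (X 0 ω)) / π (X 0 ω) * bsmooth m (Fc (X 0 ω)) y ^ 2 ∂μ := by
  have hb i := (h i).memLp_top_corrSummand (m := m) (y := y) |>.mono_exponent (p := 2) le_top
  have hmean := covariance_mean_mean (range n) (fun i _ => hb i) (fun i _ => hb i)
    (fun i _ => (h i).covariance_corrSummand_self.trans <|
      integral_comp_X_eq_of_identDistrib hiid (fun x => (1 - π x) / π x * bsmooth m (Fc x) y ^ 2) i)
    fun i _ j _ hij => ((hindep.indepFun hij).comp (measurable_corrSummand_triple π Fc m y)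
      (measurable_corrSummand_triple π Fc m y)).covariance_eq_zero (hb i) (hb j)
  rw [card_range] at hmean
  rw [← covariance_self (memLp_corrB h).aemeasurable]
  exact hmean

end Sample

theorem covariance_correction_term_general
    {Ω : Type*} [MeasurableSpace Ω] [StandardBorelSpace Ω]
    {α : Type*} [MeasurableSpace α] [MeasurableSingletonClass α] [Countable α]
    (μ : Measure Ω) [IsProbabilityMeasure μ]
    (Y : ℕ → Ω → ℝ) (X : ℕ → Ω → α) (δ : ℕ → Ω → ℝ)
    (hYm : ∀ i, Measurable (Y i)) (hXm : ∀ i, Measurable (X i)) (hδm : ∀ i, Measurable (δ i))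
    (hδ01 : ∀ i ω, δ i ω = 0 ∨ δ i ω = 1)
    -- the triples (Y_i, X_i, δ_i) are i.i.d.
    (hiid : ∀ i j, IdentDistrib (fun ω => (Y i ω, X i ω, δ i ω))
      (fun ω => (Y j ω, X j ω, δ j ω)) μ μ)
    (hindep : iIndepFun (fun i ω => (Y i ω, X i ω, δ i ω)) μ)
    -- Assumption (A1): the propensity score is bounded below by πmin > 0
    (π : α → ℝ) (πmin : ℝ) (hπmin : 0 < πmin) (hπ : ∀ x, πmin ≤ π x)
    -- π(X_i) = P(δ_i = 1 | X_i)
    (hprop : ∀ i, μ[δ i | MeasurableSpace.comap (X i) inferInstance]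
      =ᵐ[μ] fun ω => π (X i ω))
    -- MAR: δ_i is independent of Y_i conditionally on X_i
    (hMAR : ∀ i, CondIndepFun (MeasurableSpace.comap (X i) inferInstance)
      ((hXm i).comap_le) (δ i) (Y i) μ)
    -- F_{Y₁|X₁}: the conditional CDF of Y_i given X_i
    (Fc : α → ℝ → ℝ)
    (hFc : ∀ i t, μ[fun ω => ind (Y i ω) t | MeasurableSpace.comap (X i) inferInstance]
      =ᵐ[μ] fun ω => Fc (X i ω) t)
    (n : ℕ) (m : ℕ) (y : ℝ) :
    cov (tildeFnm Y X δ π n m y) (corrB X δ π Fc n m y) μ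
        = variance (corrB X δ π Fc n m y) μ ∧
    variance (corrB X δ π Fc n m y) μ
        = (n : ℝ)⁻¹ * ∫ ω, (1 - π (X 0 ω)) / π (X 0 ω) *
            (∑ k ∈ Finset.range (m + 1), Fc (X 0 ω) ((k : ℝ) / (m : ℝ)) * bern m k y) ^ 2 ∂μ ∧
    variance (fun ω => tildeFnm Y X δ π n m y ω - corrB X δ π Fc n m y ω) μ
        = variance (tildeFnm Y X δ π n m y) μ
          - (n : ℝ)⁻¹ * ∫ ω, (1 - π (X 0 ω)) / π (X 0 ω) *
              (∑ k ∈ Finset.range (m + 1), Fc (X 0 ω) ((k : ℝ) / (m : ℝ)) * bern m k y) ^ 2 ∂μ := by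
  have h : ∀ i, MissingAtRandom μ (Y i) (X i) (δ i) π Fc := fun i =>
    ⟨hYm i, hXm i, hδm i, hδ01 i, ⟨πmin, hπmin, hπ⟩, hprop i, hMAR i, hFc i⟩
  have hcov := covariance_tildeFnm_corrB (n := n) (m := m) (y := y) h hiid hindep
  have hvar := variance_corrB (n := n) (m := m) (y := y) h hiid hindep
  unfold bsmooth at hcov hvar
  -- `cov` is `ProbabilityTheory.covariance` (notation `cov[·, ·; μ]`) by definition.
  refine ⟨hcov.trans hvar.symm, hvar, ?_⟩
  rw [variance_fun_sub (memLp_tildeFnm h) (memLp_corrB h), hcov, hvar]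
  ring

/-- Under the MAR setup, `Cov(A_{n,m}, B_{n,m}) = Var(B_{n,m})
  = n⁻¹ E[((1−π(X₁))/π(X₁)) (∑_k F_{Y₁|X₁}(k/m) b_{m,k}(y))²]`, and consequently
`Var(A_{n,m} − B_{n,m}) = Var(F̃_{n,m}(y)) − n⁻¹ E[((1−π(X₁))/π(X₁)) (∑_k F_{Y₁|X₁}(k/m) b_{m,k}(y))²]`. -/
theorem covariance_correction_term
    {Ω : Type*} [MeasurableSpace Ω] [StandardBorelSpace Ω]
    {α : Type*} [MeasurableSpace α] [MeasurableSingletonClass α] [Countable α]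
    (μ : Measure Ω) [IsProbabilityMeasure μ]
    (Y : ℕ → Ω → ℝ) (X : ℕ → Ω → α) (δ : ℕ → Ω → ℝ)
    (hYm : ∀ i, Measurable (Y i)) (hXm : ∀ i, Measurable (X i)) (hδm : ∀ i, Measurable (δ i))
    (hY01 : ∀ i ω, Y i ω ∈ Set.Icc (0 : ℝ) 1)
    (hδ01 : ∀ i ω, δ i ω = 0 ∨ δ i ω = 1)
    -- the triples (Y_i, X_i, δ_i) are i.i.d.
    (hiid : ∀ i j, IdentDistrib (fun ω => (Y i ω, X i ω, δ i ω))
      (fun ω => (Y j ω, X j ω, δ j ω)) μ μ)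
    (hindep : iIndepFun (fun i ω => (Y i ω, X i ω, δ i ω)) μ)
    -- Assumption (A1): the propensity score is bounded below by πmin > 0
    (π : α → ℝ) (πmin : ℝ) (hπmin : 0 < πmin) (hπ : ∀ x, πmin ≤ π x)
    -- π(X_i) = P(δ_i = 1 | X_i)
    (hprop : ∀ i, μ[δ i | MeasurableSpace.comap (X i) inferInstance]
      =ᵐ[μ] fun ω => π (X i ω))
    -- MAR: δ_i is independent of Y_i conditionally on X_i
    (hMAR : ∀ i, CondIndepFun (MeasurableSpace.comap (X i) inferInstance)
      ((hXm i).comap_le) (δ i) (Y i) μ)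
    -- F is the CDF of the Y_i
    (F : ℝ → ℝ) (hF : ∀ t, F t = (μ {ω | Y 0 ω ≤ t}).toReal)
    -- F_{Y₁|X₁}: the conditional CDF of Y_i given X_i
    (Fc : α → ℝ → ℝ)
    (hFc : ∀ i t, μ[fun ω => ind (Y i ω) t | MeasurableSpace.comap (X i) inferInstance]
      =ᵐ[μ] fun ω => Fc (X i ω) t)
    (n : ℕ) (hn : 0 < n) (m : ℕ) (y : ℝ) (hy : y ∈ Set.Icc (0 : ℝ) 1) :
    cov (tildeFnm Y X δ π n m y) (corrB X δ π Fc n m y) μ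
        = variance (corrB X δ π Fc n m y) μ ∧
    variance (corrB X δ π Fc n m y) μ
        = (n : ℝ)⁻¹ * ∫ ω, (1 - π (X 0 ω)) / π (X 0 ω) *
            (∑ k ∈ Finset.range (m + 1), Fc (X 0 ω) ((k : ℝ) / (m : ℝ)) * bern m k y) ^ 2 ∂μ ∧
    variance (fun ω => tildeFnm Y X δ π n m y ω - corrB X δ π Fc n m y ω) μ
        = variance (tildeFnm Y X δ π n m y) μ
          - (n : ℝ)⁻¹ * ∫ ω, (1 - π (X 0 ω)) / π (X 0 ω) *
              (∑ k ∈ Finset.range (m + 1), Fc (X 0 ω) ((k : ℝ) / (m : ℝ)) * bern m k y) ^ 2 ∂μ :=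
  covariance_correction_term_general μ Y X δ hYm hXm hδm hδ01 hiid hindep π πmin hπmin hπ hprop hMAR
    Fc hFc n m y
end
end

section
/- Under the MAR setup, for every y ∈ [0,1] the following identity holds: σ²(y) − C(y) = E[ F_{Y₁|X₁}(y)(1 − F_{Y₁|X₁}(y))/π(X₁) ] + E[ F_{Y₁|X₁}(y)² ] − F(y)², where σ²(y) = E[F_{Y₁|X₁}(y)/π(X₁)] − F(y)² and C(y) = E[((1 − π(X₁))/π(X₁)) F_{Y₁|X₁}(y)²]. In particular, C(y) ≥ 0, so the asymptotic variance ν²(y) = σ²(y) − C(y) of the feasible estimator is no larger than the asymptotic variance σ²(y) of the pseudo estimator. -/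
open MeasureTheory ProbabilityTheory Filter Asymptotics

noncomputable section

/-- `σ²(y) = E[F_{Y₁|X₁}(y)/π(X₁)] − F(y)²`. -/
def sigma2 {Ω α : Type*} [MeasurableSpace Ω] (μ : Measure Ω) (X : ℕ → Ω → α)
    (π : α → ℝ) (Fc : α → ℝ → ℝ) (F : ℝ → ℝ) (y : ℝ) : ℝ :=
  (∫ ω, Fc (X 0 ω) y / π (X 0 ω) ∂μ) - F y ^ 2

/-- `V(y) = √(y(1−y)/π) ⬝ E[f_{Y₁|X₁}(y)/π(X₁)]` (here `π` in the square root is `Real.pi`). -/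
def Vfun {Ω α : Type*} [MeasurableSpace Ω] (μ : Measure Ω) (X : ℕ → Ω → α)
    (π : α → ℝ) (fc : α → ℝ → ℝ) (y : ℝ) : ℝ :=
  Real.sqrt (y * (1 - y) / Real.pi) * ∫ ω, fc (X 0 ω) y / π (X 0 ω) ∂μ

/-- `B(y) = ½ y(1−y) f'(y)`. -/
def Bfun (f' : ℝ → ℝ) (y : ℝ) : ℝ := 1 / 2 * y * (1 - y) * f' y

/-- `C(y) = E[((1−π(X₁))/π(X₁)) F_{Y₁|X₁}(y)²]`. -/
def Cfun {Ω α : Type*} [MeasurableSpace Ω] (μ : Measure Ω) (X : ℕ → Ω → α)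
    (π : α → ℝ) (Fc : α → ℝ → ℝ) (y : ℝ) : ℝ :=
  ∫ ω, (1 - π (X 0 ω)) / π (X 0 ω) * Fc (X 0 ω) y ^ 2 ∂μ

/-
Write `g = F_{Y₁|X₁}(y)` and `p = π(X₁)`. Pointwise, `g/p − (1−p)/p·g² = g(1−g)/p + g²`. As
conditional expectations of variables with values in `[0,1]`, `g` and `p` are bounded by `1`, and
`p ≥ π_min`, so `g` and `1/p` lie in `L^∞`; all four integrands are then integrable and the
identity integrates. Finally `C(y) ≥ 0` because `0 < p ≤ 1`.
-/

open scoped ENNReal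

lemma abs_ind_le_one (t y : ℝ) : |ind t y| ≤ 1 := by
  unfold ind
  split_ifs <;> simp

lemma div_sub_one_sub_div_mul_sq {g p : ℝ} (hp : p ≠ 0) :
    g / p - (1 - p) / p * g ^ 2 = g * (1 - g) / p + g ^ 2 := by
  field_simp
  ring

section

variable {Ω : Type*} [MeasurableSpace Ω] {μ : Measure Ω}

lemma memLp_top_of_condExp_ae_eq {m : MeasurableSpace Ω} {f g : Ω → ℝ} {R : ℝ}
    (hf : ∀ᵐ ω ∂μ, |f ω| ≤ R) (hg : μ[f | m] =ᵐ[μ] g) : MemLp g ∞ μ := by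
  refine memLp_top_of_bound (integrable_condExp.congr hg).aestronglyMeasurable R ?_
  filter_upwards [ae_bdd_abs_condExp_of_ae_bdd_abs (m := m) hf, hg] with ω hω hgω
  rwa [← hgω]

lemma memLp_top_inv_of_le {p : Ω → ℝ} {c : ℝ} (hp : AEStronglyMeasurable p μ) (hc : 0 < c)
    (hcp : ∀ᵐ ω ∂μ, c ≤ p ω) : MemLp (fun ω => (p ω)⁻¹) ∞ μ := by
  refine memLp_top_of_bound hp.aemeasurable.inv.aestronglyMeasurable c⁻¹ ?_
  filter_upwards [hcp] with ω hω
  rw [norm_inv, Real.norm_of_nonneg (hc.le.trans hω)]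
  exact inv_anti₀ hc hω

lemma integral_div_sub_integral_one_sub_div_mul_sq [IsFiniteMeasure μ] {g p : Ω → ℝ}
    (hg : MemLp g ∞ μ) (hp : MemLp (fun ω => (p ω)⁻¹) ∞ μ) (hp0 : ∀ᵐ ω ∂μ, p ω ≠ 0) :
    (∫ ω, g ω / p ω ∂μ) - ∫ ω, (1 - p ω) / p ω * g ω ^ 2 ∂μ
      = (∫ ω, g ω * (1 - g ω) / p ω ∂μ) + ∫ ω, g ω ^ 2 ∂μ := by
  have hg2 : MemLp (fun ω => g ω ^ 2) ∞ μ := by simpa only [sq] using hg.mul' hg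
  have hint_div : Integrable (fun ω => g ω / p ω) μ := by
    simpa only [div_eq_mul_inv] using (hp.mul' hg).integrable le_top
  have hint_odds : Integrable (fun ω => (1 - p ω) / p ω * g ω ^ 2) μ := by
    refine ((hg2.mul' (hp.sub (memLp_const 1))).integrable le_top).congr ?_
    filter_upwards [hp0] with ω hω
    simp only [Pi.sub_apply]
    field_simp
  have hint_var : Integrable (fun ω => g ω * (1 - g ω) / p ω) μ := by
    simpa only [div_eq_mul_inv, Pi.sub_apply] using
      (hp.mul' (((memLp_const 1).sub hg).mul' hg (r := ∞))).integrable le_top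
  rw [← integral_sub hint_div hint_odds, ← integral_add hint_var (hg2.integrable le_top)]
  refine integral_congr_ae ?_
  filter_upwards [hp0] with ω hω
  exact div_sub_one_sub_div_mul_sq hω

end

theorem variance_reduction_identity_general
    {Ω : Type*} [MeasurableSpace Ω]
    {α : Type*} [MeasurableSpace α]
    (μ : Measure Ω) [IsProbabilityMeasure μ]
    (Y : ℕ → Ω → ℝ) (X : ℕ → Ω → α) (δ : ℕ → Ω → ℝ)
    (hδ01 : ∀ i ω, δ i ω = 0 ∨ δ i ω = 1)
    -- Assumption (A1): the propensity score is bounded below by πmin > 0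
    (π : α → ℝ) (πmin : ℝ) (hπmin : 0 < πmin) (hπ : ∀ x, πmin ≤ π x)
    -- π(X_i) = P(δ_i = 1 | X_i)
    (hprop : ∀ i, μ[δ i | MeasurableSpace.comap (X i) inferInstance]
      =ᵐ[μ] fun ω => π (X i ω))
    -- F is the CDF of the Y_i
    (F : ℝ → ℝ)
    -- F_{Y₁|X₁}: the conditional CDF of Y_i given X_i
    (Fc : α → ℝ → ℝ)
    (hFc : ∀ i t, μ[fun ω => ind (Y i ω) t | MeasurableSpace.comap (X i) inferInstance]
      =ᵐ[μ] fun ω => Fc (X i ω) t)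
    (y : ℝ) :
    sigma2 μ X π Fc F y - Cfun μ X π Fc y
        = (∫ ω, Fc (X 0 ω) y * (1 - Fc (X 0 ω) y) / π (X 0 ω) ∂μ)
          + (∫ ω, Fc (X 0 ω) y ^ 2 ∂μ) - F y ^ 2 ∧
    0 ≤ Cfun μ X π Fc y ∧
    sigma2 μ X π Fc F y - Cfun μ X π Fc y ≤ sigma2 μ X π Fc F y := by
  have hp_pos : ∀ ω, 0 < π (X 0 ω) := fun ω => hπmin.trans_le (hπ _)
  have hp_le_one : ∀ᵐ ω ∂μ, π (X 0 ω) ≤ 1 := by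
    have hδ : ∀ ω, |δ 0 ω| ≤ 1 := fun ω => by rcases hδ01 0 ω with h | h <;> simp [h]
    filter_upwards [ae_bdd_abs_condExp_of_ae_bdd_abs
      (m := MeasurableSpace.comap (X 0) inferInstance) (ae_of_all μ hδ), hprop 0] with ω hω hpω
    exact (le_abs_self _).trans (hpω ▸ hω)
  have hg : MemLp (fun ω => Fc (X 0 ω) y) ∞ μ :=
    memLp_top_of_condExp_ae_eq (ae_of_all μ fun ω => abs_ind_le_one (Y 0 ω) y) (hFc 0 y)
  have hp_inv : MemLp (fun ω => (π (X 0 ω))⁻¹) ∞ μ :=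
    memLp_top_inv_of_le (integrable_condExp.congr (hprop 0)).aestronglyMeasurable hπmin
      (ae_of_all μ fun ω => hπ _)
  have hC : 0 ≤ Cfun μ X π Fc y := by
    refine integral_nonneg_of_ae ?_
    filter_upwards [hp_le_one] with ω hω
    exact mul_nonneg (div_nonneg (sub_nonneg.mpr hω) (hp_pos ω).le) (sq_nonneg _)
  have hkey := integral_div_sub_integral_one_sub_div_mul_sq hg hp_inv
    (ae_of_all μ fun ω => (hp_pos ω).ne')
  refine ⟨?_, hC, sub_le_self _ hC⟩
  simp only [sigma2, Cfun]
  linarith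

/-- Under the MAR setup, for every `y ∈ [0,1]`:
`σ²(y) − C(y) = E[F_{Y₁|X₁}(y)(1 − F_{Y₁|X₁}(y))/π(X₁)] + E[F_{Y₁|X₁}(y)²] − F(y)²`;
in particular `C(y) ≥ 0`, so `ν²(y) = σ²(y) − C(y) ≤ σ²(y)`. -/
theorem variance_reduction_identity
    {Ω : Type*} [MeasurableSpace Ω] [StandardBorelSpace Ω]
    {α : Type*} [MeasurableSpace α] [MeasurableSingletonClass α] [Countable α]
    (μ : Measure Ω) [IsProbabilityMeasure μ]
    (Y : ℕ → Ω → ℝ) (X : ℕ → Ω → α) (δ : ℕ → Ω → ℝ)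
    (hYm : ∀ i, Measurable (Y i)) (hXm : ∀ i, Measurable (X i)) (hδm : ∀ i, Measurable (δ i))
    (hY01 : ∀ i ω, Y i ω ∈ Set.Icc (0 : ℝ) 1)
    (hδ01 : ∀ i ω, δ i ω = 0 ∨ δ i ω = 1)
    -- the triples (Y_i, X_i, δ_i) are i.i.d.
    (hiid : ∀ i j, IdentDistrib (fun ω => (Y i ω, X i ω, δ i ω))
      (fun ω => (Y j ω, X j ω, δ j ω)) μ μ)
    (hindep : iIndepFun (fun i ω => (Y i ω, X i ω, δ i ω)) μ)
    -- Assumption (A1): the propensity score is bounded below by πmin > 0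
    (π : α → ℝ) (πmin : ℝ) (hπmin : 0 < πmin) (hπ : ∀ x, πmin ≤ π x)
    -- π(X_i) = P(δ_i = 1 | X_i)
    (hprop : ∀ i, μ[δ i | MeasurableSpace.comap (X i) inferInstance]
      =ᵐ[μ] fun ω => π (X i ω))
    -- MAR: δ_i is independent of Y_i conditionally on X_i
    (hMAR : ∀ i, CondIndepFun (MeasurableSpace.comap (X i) inferInstance)
      ((hXm i).comap_le) (δ i) (Y i) μ)
    -- F is the CDF of the Y_i
    (F : ℝ → ℝ) (hF : ∀ t, F t = (μ {ω | Y 0 ω ≤ t}).toReal)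
    -- F_{Y₁|X₁}: the conditional CDF of Y_i given X_i
    (Fc : α → ℝ → ℝ)
    (hFc : ∀ i t, μ[fun ω => ind (Y i ω) t | MeasurableSpace.comap (X i) inferInstance]
      =ᵐ[μ] fun ω => Fc (X i ω) t)
    (y : ℝ) (hy : y ∈ Set.Icc (0 : ℝ) 1) :
    sigma2 μ X π Fc F y - Cfun μ X π Fc y
        = (∫ ω, Fc (X 0 ω) y * (1 - Fc (X 0 ω) y) / π (X 0 ω) ∂μ)
          + (∫ ω, Fc (X 0 ω) y ^ 2 ∂μ) - F y ^ 2 ∧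
    0 ≤ Cfun μ X π Fc y ∧
    sigma2 μ X π Fc F y - Cfun μ X π Fc y ≤ sigma2 μ X π Fc F y :=
  variance_reduction_identity_general μ Y X δ hδ01 π πmin hπmin hπ hprop F Fc hFc y
end
end
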